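/- If P and Q are disjoint lattice polytopes contained in the hypercube [0,k]^d, then the Euclidean distance between P and Q is at least 1/(k^{2d−1} · (√d)^{3d+2}). -/

import Mathlib

/-- A lattice (d,k)-polytope: the convex hull of a finite nonempty set of integer
points contained in the hypercube [0,k]^d. -/
def IsLatticePolytope (d k : ℕ) (P : Set (EuclideanSpace ℝ (Fin d))) : Prop :=
  ∃ V : Finset (EuclideanSpace ℝ (Fin d)), V.Nonempty ∧
    (∀ v ∈ V, ∀ i, (∃ z : ℤ, v i = z) ∧ 0 ≤ v i ∧ v i ≤ k) ∧
    P = convexHull ℝ (V : Set (EuclideanSpace ℝ (Fin d)))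

/-!
Let `v` be the point of minimal norm in `P - Q = conv (V_P - V_Q)`. It lies on the exposed face
`{x | ⟪v, x⟫ = ‖v‖²}`, so `v` is the orthogonal projection of `0` onto the affine span of lattice
points `w, w + b₁, …, w + b_r` with the `bᵢ` linearly independent and orthogonal to `v`, whence
`r ≤ d - 1`. The Gram matrix `G` of the `bᵢ` is an integer matrix, and solving the normal
equations for `v - w` by Cramer's rule shows that `det G · ‖v‖²` is a positive integer. Since the
entries of `G` are at most `4k²d`, this gives `‖v‖² ≥ 1 / det G ≥ 1 / ((d-1)! (4k²d)^(d-1))`,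
which is at least the square of the claimed bound.
-/

open RealInnerProductSpace Pointwise Module Submodule Matrix

theorem RingHom.map_det_smul_eq_of_map_mulVec_eq {R S ι : Type*} [CommRing R] [CommRing S]
    [Fintype ι] [DecidableEq ι] (f : R →+* S) (A : Matrix ι ι R) {x : ι → S} {c : ι → R}
    (h : A.map f *ᵥ x = f ∘ c) : f A.det • x = f ∘ (A.adjugate *ᵥ c) := by
  have hmul : f ∘ (A.adjugate *ᵥ c) = A.adjugate.map f *ᵥ (f ∘ c) := funext (f.map_mulVec _ _)
  have hadj : A.adjugate.map f = (A.map f).adjugate := f.map_adjugate A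
  rw [hmul, ← h, hadj, f.map_det, mulVec_mulVec, adjugate_mul, smul_mulVec, one_mulVec]
  rfl

variable {E : Type*} [NormedAddCommGroup E] [InnerProductSpace ℝ E]

theorem exists_forall_norm_sq_le_inner {K : Set E} (hne : K.Nonempty) (hK : IsComplete K)
    (hconv : Convex ℝ K) : ∃ v ∈ K, ∀ y ∈ K, ‖v‖ ^ 2 ≤ ⟪v, y⟫ := by
  obtain ⟨v, hvK, hv⟩ := exists_norm_eq_iInf_of_complete_convex hne hK hconv 0
  refine ⟨v, hvK, fun y hy => ?_⟩
  have := (norm_eq_iInf_iff_real_inner_le_zero hconv hvK).1 hv y hy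
  rw [zero_sub, inner_neg_left, inner_sub_right, real_inner_self_eq_norm_sq] at this
  linarith

theorem norm_le_of_norm_sq_le_inner {v y : E} (h : ‖v‖ ^ 2 ≤ ⟪v, y⟫) : ‖v‖ ≤ ‖y‖ := by
  rcases (norm_nonneg v).eq_or_lt with hv | hv
  · rw [← hv]; exact norm_nonneg y
  · nlinarith [real_inner_le_norm v y]

theorem mem_convexHull_filter_inner_eq {T : Finset E} {v : E} (hv : v ∈ convexHull ℝ (T : Set E))
    (hvT : ∀ t ∈ T, ‖v‖ ^ 2 ≤ ⟪v, t⟫) :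
    v ∈ convexHull ℝ (T.filter fun t => ⟪v, t⟫ = ‖v‖ ^ 2 : Set E) := by
  obtain ⟨w, hw0, hw1, hwv⟩ := Finset.mem_convexHull'.1 hv
  have hgap : ∑ t ∈ T, w t * (⟪v, t⟫ - ‖v‖ ^ 2) = 0 := by
    have : ∑ t ∈ T, w t * ⟪v, t⟫ = ‖v‖ ^ 2 := by
      simp_rw [← real_inner_smul_right, ← inner_sum, hwv, real_inner_self_eq_norm_sq]
    simp only [mul_sub, Finset.sum_sub_distrib, ← Finset.sum_mul, this, hw1, one_mul, sub_self]
  have hzero : ∀ t ∈ T, w t ≠ 0 → ⟪v, t⟫ = ‖v‖ ^ 2 := fun t ht hwt => by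
    have := (Finset.sum_eq_zero_iff_of_nonneg fun t ht =>
      mul_nonneg (hw0 t ht) (sub_nonneg.2 (hvT t ht))).1 hgap t ht
    exact sub_eq_zero.1 ((mul_eq_zero.1 this).resolve_left hwt)
  refine Finset.mem_convexHull'.2 ⟨w, fun t ht => hw0 t (Finset.mem_filter.1 ht).1, ?_, ?_⟩
  · rw [Finset.sum_filter_of_ne fun t ht hwt => hzero t ht hwt, hw1]
  · rw [Finset.sum_filter_of_ne fun t ht hwt => hzero t ht fun h => hwt (by rw [h, zero_smul]),
      hwv]

theorem exists_sub_mem_span_forall_inner_eq_zero {T : Finset E} {v : E}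
    (hv : v ∈ convexHull ℝ (T : Set E)) (hvT : ∀ t ∈ T, ‖v‖ ^ 2 ≤ ⟪v, t⟫) :
    ∃ w ∈ T, ∃ D ⊆ (· - w) '' (T : Set E), v - w ∈ span ℝ D ∧ ∀ b ∈ D, ⟪b, v⟫ = 0 := by
  set S := T.filter fun t => ⟪v, t⟫ = ‖v‖ ^ 2
  have hvS : v ∈ convexHull ℝ (S : Set E) := mem_convexHull_filter_inner_eq hv hvT
  obtain ⟨w, hw⟩ : S.Nonempty := Finset.coe_nonempty.1 (convexHull_nonempty_iff.1 ⟨v, hvS⟩)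
  have hwS := Finset.mem_filter.1 hw
  refine ⟨w, hwS.1, (· - w) '' (S : Set E), Set.image_mono (Finset.filter_subset _ _), ?_, ?_⟩
  · have := vsub_mem_vectorSpan_of_mem_affineSpan_of_mem_affineSpan
      (convexHull_subset_affineSpan _ hvS) (subset_affineSpan ℝ _ hw)
    simpa only [vectorSpan_eq_span_vsub_set_right ℝ (Finset.mem_coe.2 hw), vsub_eq_sub] using this
  · rintro _ ⟨s, hs, rfl⟩
    rw [inner_sub_left, real_inner_comm v, real_inner_comm v, (Finset.mem_filter.1 hs).2, hwS.2,
      sub_self]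

theorem finrank_le_finrank_sub_one_of_le_orthogonal [FiniteDimensional ℝ E] {U : Submodule ℝ E}
    {v : E} (hv : v ≠ 0) (hU : U ≤ (ℝ ∙ v)ᗮ) : finrank ℝ U ≤ finrank ℝ E - 1 := by
  have h1 := (ℝ ∙ v).finrank_add_finrank_orthogonal
  rw [finrank_span_singleton hv] at h1
  have h2 := Submodule.finrank_mono hU
  omega

theorem det_gram_le {ι : Type*} [Fintype ι] [DecidableEq ι] {b : ι → E} {M : ℝ}
    (hb : ∀ i j, |⟪b i, b j⟫| ≤ M) :
    (gram ℝ b).det ≤ (Fintype.card ι).factorial * M ^ Fintype.card ι := by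
  have := Matrix.det_le (A := gram ℝ b) (abv := AbsoluteValue.abs) fun i j => hb i j
  rw [nsmul_eq_mul] at this
  exact (le_abs_self _).trans this

section IntegralInnerProducts

variable {L : AddSubgroup E} (hL : ∀ x ∈ L, ∀ y ∈ L, ∃ z : ℤ, ⟪x, y⟫ = z)
include hL

theorem exists_int_eq_det_gram_mul_norm_sq {ι : Type*} [Fintype ι] [DecidableEq ι] {b : ι → E}
    (hb : ∀ i, b i ∈ L) {w v : E} (hw : w ∈ L) (hvw : v - w ∈ span ℝ (Set.range b))
    (horth : ∀ i, ⟪b i, v⟫ = 0) : ∃ N : ℤ, (gram ℝ b).det * ‖v‖ ^ 2 = N := by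
  choose G hG using fun i j => hL _ (hb i) _ (hb j)
  choose c hc using fun i => hL _ (hb i) _ hw
  obtain ⟨n, hn⟩ := hL _ hw _ hw
  obtain ⟨μ, hμ⟩ := (mem_span_range_iff_exists_fun ℝ).1 hvw
  have hgram : gram ℝ b = (Matrix.of G).map (Int.castRingHom ℝ) := by
    ext i j; simp [gram_apply, hG]
  have hnormal : (Matrix.of G).map (Int.castRingHom ℝ) *ᵥ μ = Int.castRingHom ℝ ∘ (-c) := by
    funext i
    have : ⟪b i, v - w⟫ = -⟪b i, w⟫ := by rw [inner_sub_right, horth i, zero_sub]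
    rw [← hμ, inner_sum] at this
    rw [← hgram, Function.comp_apply, Pi.neg_apply, map_neg, eq_intCast, ← hc, ← this]
    simp only [Matrix.mulVec, dotProduct, gram_apply, real_inner_smul_right, mul_comm]
  -- Cramer's rule applied to the normal equations makes `det G • μ` integral
  have hcramer := (Int.castRingHom ℝ).map_det_smul_eq_of_map_mulVec_eq _ hnormal
  have hv : ‖v‖ ^ 2 = n + ∑ i, μ i * c i := by
    have hvv : ⟪v, v - w⟫ = 0 := by
      rw [← hμ, inner_sum]
      exact Finset.sum_eq_zero fun i _ => by
        rw [real_inner_smul_right, real_inner_comm, horth, mul_zero]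
    calc ‖v‖ ^ 2 = ⟪v, w⟫ := by
          rw [← real_inner_self_eq_norm_sq]; linarith [inner_sub_right (𝕜 := ℝ) v v w]
      _ = ⟪w, w⟫ + ⟪v - w, w⟫ := by rw [inner_sub_left, real_inner_comm w v]; ring
      _ = n + ∑ i, μ i * c i := by
          rw [hn, ← hμ, sum_inner]
          simp only [real_inner_smul_left, hc]
  refine ⟨(Matrix.of G).det * n + ∑ i, ((Matrix.of G).adjugate *ᵥ -c) i * c i, ?_⟩
  have hμ' : ∀ i, ((Matrix.of G).det : ℝ) * μ i = ((Matrix.of G).adjugate *ᵥ -c) i :=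
    fun i => congrFun hcramer i
  have hdet : (gram ℝ b).det = (Matrix.of G).det := by
    rw [hgram]; exact ((Int.castRingHom ℝ).map_det _).symm
  rw [hdet, hv, mul_add, Finset.mul_sum]
  simp only [Int.cast_add, Int.cast_mul, Int.cast_sum, ← mul_assoc, hμ']

theorem one_le_det_gram_mul_norm_sq {ι : Type*} [Fintype ι] [DecidableEq ι] {b : ι → E}
    (hb : ∀ i, b i ∈ L) (hli : LinearIndependent ℝ b) {w v : E} (hw : w ∈ L) (hv : v ≠ 0)
    (hvw : v - w ∈ span ℝ (Set.range b)) (horth : ∀ i, ⟪b i, v⟫ = 0) :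
    1 ≤ (gram ℝ b).det * ‖v‖ ^ 2 := by
  obtain ⟨N, hN⟩ := exists_int_eq_det_gram_mul_norm_sq hL hb hw hvw horth
  have hpos : 0 < (gram ℝ b).det * ‖v‖ ^ 2 :=
    mul_pos (posDef_gram_of_linearIndependent hli).det_pos (by positivity)
  rw [hN] at hpos ⊢
  exact_mod_cast Int.cast_pos.1 hpos

theorem one_div_le_norm_sq_of_forall_norm_sq_le_inner [FiniteDimensional ℝ E] {T : Finset E}
    (hTL : ∀ t ∈ T, t ∈ L) {R : ℝ} (hR : 1 ≤ R) (hTR : ∀ t ∈ T, ‖t‖ ≤ R) {v : E}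
    (hv : v ∈ convexHull ℝ (T : Set E)) (hv0 : v ≠ 0) (hvT : ∀ t ∈ T, ‖v‖ ^ 2 ≤ ⟪v, t⟫) :
    1 / ((finrank ℝ E - 1).factorial * (4 * R ^ 2) ^ (finrank ℝ E - 1)) ≤ ‖v‖ ^ 2 := by
  obtain ⟨w, hwT, D, hDT, hvD, hDv⟩ := exists_sub_mem_span_forall_inner_eq_zero hv hvT
  obtain ⟨b, hbD, hspan, hli⟩ := exists_fun_fin_finrank_span_eq ℝ D
  have hbT : ∀ i, ∃ t ∈ T, t - w = b i := fun i => hDT (hbD i)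
  have hr : finrank ℝ (span ℝ D) ≤ finrank ℝ E - 1 :=
    finrank_le_finrank_sub_one_of_le_orthogonal hv0 <| span_le.2 fun x hx =>
      mem_orthogonal_singleton_iff_inner_left.2 (hDv x hx)
  have hbL : ∀ i, b i ∈ L := fun i => by
    obtain ⟨t, ht, hb⟩ := hbT i
    exact hb ▸ L.sub_mem (hTL t ht) (hTL w hwT)
  have hbR : ∀ i j, |⟪b i, b j⟫| ≤ 4 * R ^ 2 := fun i j => by
    have hnorm : ∀ i, ‖b i‖ ≤ 2 * R := fun i => by
      obtain ⟨t, ht, hb⟩ := hbT i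
      rw [← hb]
      linarith [norm_sub_le t w, hTR t ht, hTR w hwT]
    calc |⟪b i, b j⟫| ≤ ‖b i‖ * ‖b j‖ := abs_real_inner_le_norm _ _
      _ ≤ (2 * R) * (2 * R) := mul_le_mul (hnorm i) (hnorm j) (norm_nonneg _) (by linarith)
      _ = 4 * R ^ 2 := by ring
  have hdet : (gram ℝ b).det ≤ (finrank ℝ E - 1).factorial * (4 * R ^ 2) ^ (finrank ℝ E - 1) :=
    calc (gram ℝ b).det
        ≤ (finrank ℝ (span ℝ D)).factorial * (4 * R ^ 2) ^ finrank ℝ (span ℝ D) := by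
          simpa using det_gram_le hbR
      _ ≤ _ := mul_le_mul (by exact_mod_cast Nat.factorial_le hr)
          (pow_le_pow_right₀ (by nlinarith) hr) (by positivity) (by positivity)
  have hone := one_le_det_gram_mul_norm_sq hL hbL hli (hTL w hwT) hv0 (hspan.symm ▸ hvD)
    fun i => hDv _ (hbD i)
  rw [div_le_iff₀ (by positivity)]
  linarith [mul_le_mul_of_nonneg_right hdet (sq_nonneg ‖v‖)]

theorem one_div_le_norm_sq_of_mem_convexHull [FiniteDimensional ℝ E] {T : Finset E}
    (hTL : ∀ t ∈ T, t ∈ L) {R : ℝ} (hR : 1 ≤ R) (hTR : ∀ t ∈ T, ‖t‖ ≤ R)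
    (h0 : (0 : E) ∉ convexHull ℝ (T : Set E)) {x : E} (hx : x ∈ convexHull ℝ (T : Set E)) :
    1 / ((finrank ℝ E - 1).factorial * (4 * R ^ 2) ^ (finrank ℝ E - 1)) ≤ ‖x‖ ^ 2 := by
  obtain ⟨v, hv, hvmin⟩ := exists_forall_norm_sq_le_inner ⟨x, hx⟩
    (T.finite_toSet.isCompact_convexHull (𝕜 := ℝ)).isComplete (convex_convexHull ℝ _)
  have hv0 : v ≠ 0 := fun h => h0 (h ▸ hv)
  calc _ ≤ ‖v‖ ^ 2 := one_div_le_norm_sq_of_forall_norm_sq_le_inner hL hTL hR hTR hv hv0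
          fun t ht => hvmin t (subset_convexHull ℝ _ ht)
    _ ≤ ‖x‖ ^ 2 := by gcongr; exact norm_le_of_norm_sq_le_inner (hvmin x hx)

end IntegralInnerProducts

def integerLattice (ι : Type*) : AddSubgroup (EuclideanSpace ℝ ι) where
  carrier := {x | ∀ i, ∃ z : ℤ, x i = z}
  add_mem' {x y} hx hy i := by
    obtain ⟨a, ha⟩ := hx i
    obtain ⟨b, hb⟩ := hy i
    exact ⟨a + b, by simp [ha, hb]⟩
  zero_mem' _ := ⟨0, by simp⟩
  neg_mem' {x} hx i := by
    obtain ⟨a, ha⟩ := hx i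
    exact ⟨-a, by simp [ha]⟩

theorem exists_int_eq_inner_of_mem_integerLattice {ι : Type*} [Fintype ι] :
    ∀ x ∈ integerLattice ι, ∀ y ∈ integerLattice ι, ∃ z : ℤ, ⟪x, y⟫ = z := by
  intro x hx y hy
  choose a ha using hx
  choose b hb using hy
  exact ⟨∑ i, b i * a i, by simp [PiLp.inner_apply, ha, hb]⟩

theorem EuclideanSpace.norm_le_sqrt_card_mul {ι : Type*} [Fintype ι] {x : EuclideanSpace ℝ ι}
    {c : ℝ} (hc : 0 ≤ c) (hx : ∀ i, |x i| ≤ c) : ‖x‖ ≤ √(Fintype.card ι) * c := by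
  rw [EuclideanSpace.norm_eq, ← Real.sqrt_sq hc, ← Real.sqrt_mul (Nat.cast_nonneg _)]
  gcongr
  calc ∑ i, ‖x i‖ ^ 2 ≤ ∑ _i : ι, c ^ 2 := by
        gcongr with i
        rw [Real.norm_eq_abs]
        exact hx i
    _ = Fintype.card ι * c ^ 2 := by simp

theorem factorial_mul_pow_le_pow_mul_pow (d k : ℕ) (hd : 1 ≤ d) (hk : 1 ≤ k) :
    (d - 1).factorial * (4 * k ^ 2 * d) ^ (d - 1) ≤ k ^ (4 * d - 2) * d ^ (3 * d + 2) := by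
  have h4 : 4 ^ (d - 1) ≤ d ^ (d + 4) := by
    rcases le_or_gt 4 d with h | h
    · calc 4 ^ (d - 1) ≤ d ^ (d - 1) := Nat.pow_le_pow_left h _
        _ ≤ d ^ (d + 4) := Nat.pow_le_pow_right (by omega) (by omega)
    · interval_cases d <;> norm_num
  have hfac : (d - 1).factorial ≤ d ^ (d - 1) :=
    (Nat.factorial_le_pow _).trans (Nat.pow_le_pow_left (by omega) _)
  calc (d - 1).factorial * (4 * k ^ 2 * d) ^ (d - 1)
      = (d - 1).factorial * (4 ^ (d - 1) * k ^ (2 * (d - 1)) * d ^ (d - 1)) := by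
        rw [mul_pow, mul_pow, pow_mul]
    _ ≤ d ^ (d - 1) * (d ^ (d + 4) * k ^ (2 * (d - 1)) * d ^ (d - 1)) := by gcongr
    _ = k ^ (2 * (d - 1)) * d ^ (3 * d + 2) := by
        rw [show 3 * d + 2 = (d - 1) + ((d + 4) + (d - 1)) by omega, pow_add, pow_add]; ring
    _ ≤ k ^ (4 * d - 2) * d ^ (3 * d + 2) := by gcongr; omega

theorem factorial_mul_pow_le_sq (d k : ℕ) (hd : 1 ≤ d) (hk : 1 ≤ k) :
    (d - 1).factorial * (4 * (√d * k) ^ 2) ^ (d - 1)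
      ≤ ((k : ℝ) ^ (2 * d - 1) * √d ^ (3 * d + 2)) ^ 2 := by
  have hsq : √(d : ℝ) ^ 2 = d := Real.sq_sqrt (Nat.cast_nonneg d)
  have hk' : ((k : ℝ) ^ (2 * d - 1)) ^ 2 = (k : ℝ) ^ (4 * d - 2) := by
    rw [← pow_mul, show (2 * d - 1) * 2 = 4 * d - 2 by omega]
  have hd' : (√(d : ℝ) ^ (3 * d + 2)) ^ 2 = (d : ℝ) ^ (3 * d + 2) := by
    rw [← pow_mul, mul_comm, pow_mul, hsq]
  have hR : 4 * (√(d : ℝ) * k) ^ 2 = 4 * (k : ℝ) ^ 2 * d := by rw [mul_pow, hsq]; ring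
  rw [hR, mul_pow (_ ^ _), hk', hd']
  exact_mod_cast factorial_mul_pow_le_pow_mul_pow d k hd hk

theorem sub_mem_integerLattice_and_norm_le {d k : ℕ} {V W : Finset (EuclideanSpace ℝ (Fin d))}
    (hV : ∀ v ∈ V, ∀ i, (∃ z : ℤ, v i = z) ∧ 0 ≤ v i ∧ v i ≤ k)
    (hW : ∀ w ∈ W, ∀ i, (∃ z : ℤ, w i = z) ∧ 0 ≤ w i ∧ w i ≤ k) :
    ∀ t ∈ V - W, t ∈ integerLattice (Fin d) ∧ ‖t‖ ≤ √d * k := by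
  intro t ht
  obtain ⟨v, hv, w, hw, rfl⟩ := Finset.mem_sub.1 ht
  refine ⟨(integerLattice _).sub_mem (fun i => (hV v hv i).1) (fun i => (hW w hw i).1), ?_⟩
  simpa using EuclideanSpace.norm_le_sqrt_card_mul (x := v - w) (Nat.cast_nonneg k) fun i => by
    rw [PiLp.sub_apply]
    exact abs_sub_le_iff.2 ⟨by linarith [(hV v hv i).2.2, (hW w hw i).2.1],
      by linarith [(hV v hv i).2.1, (hW w hw i).2.2]⟩

theorem stmt_1 (d k : ℕ) (hd : 1 ≤ d) (hk : 1 ≤ k)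
    (P Q : Set (EuclideanSpace ℝ (Fin d)))
    (hP : IsLatticePolytope d k P) (hQ : IsLatticePolytope d k Q)
    (hdisj : P ∩ Q = ∅) :
    ∀ p ∈ P, ∀ q ∈ Q,
      1 / ((k : ℝ) ^ (2 * d - 1) * Real.sqrt d ^ (3 * d + 2)) ≤ dist p q := by
  obtain ⟨VP, -, hVP, rfl⟩ := hP
  obtain ⟨VQ, -, hVQ, rfl⟩ := hQ
  intro p hp q hq
  have hT := sub_mem_integerLattice_and_norm_le hVP hVQ
  have hR : 1 ≤ √d * (k : ℝ) :=
    one_le_mul_of_one_le_of_one_le (Real.one_le_sqrt.2 (by exact_mod_cast hd))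
      (by exact_mod_cast hk)
  have hhull : convexHull ℝ ↑(VP - VQ) =
      convexHull ℝ ↑VP - convexHull ℝ (VQ : Set (EuclideanSpace ℝ (Fin d))) := by
    rw [Finset.coe_sub, convexHull_sub]
  have h0 : (0 : EuclideanSpace ℝ (Fin d)) ∉ convexHull ℝ ↑(VP - VQ) := by
    rw [hhull]
    rintro ⟨a, ha, b, hb, hab⟩
    exact hdisj.subset ⟨ha, sub_eq_zero.1 hab ▸ hb⟩
  have hsq := one_div_le_norm_sq_of_mem_convexHull exists_int_eq_inner_of_mem_integerLattice
    (fun t ht => (hT t ht).1) hR (fun t ht => (hT t ht).2) h0 (hhull ▸ Set.sub_mem_sub hp hq)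
  rw [finrank_euclideanSpace_fin] at hsq
  rw [dist_eq_norm]
  refine le_of_pow_le_pow_left₀ two_ne_zero (norm_nonneg _) ?_
  calc (1 / ((k : ℝ) ^ (2 * d - 1) * √d ^ (3 * d + 2))) ^ 2
      = 1 / ((k : ℝ) ^ (2 * d - 1) * √d ^ (3 * d + 2)) ^ 2 := by rw [div_pow, one_pow]
    _ ≤ 1 / ((d - 1).factorial * (4 * (√d * k) ^ 2) ^ (d - 1)) :=
        one_div_le_one_div_of_le (by positivity) (factorial_mul_pow_le_sq d k hd hk)
    _ ≤ ‖p - q‖ ^ 2 := hsq
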